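/- For z = (z1,z2) ∈ N^2 and z' on the boundary of the cylinder C_ε(z) = {z'' : dist(z'', segment [0,z]) ≥ |z|^{3/4+ε}} with 0 ≤ z' ≤ z coordinatewise, and with z on the diagonal direction (z1 = z2 = n), the defect Δ(z,z') = 2(√(z1 z2) − √(z1' z2') − √((z1−z1')(z2−z2'))) satisfies Δ(z,z') ≥ c |z|^{1/2+2ε} for some constant c > 0 depending only on ε, for all |z| sufficiently large. -/
import Mathlib

open Real Set

/-- Euclidean distance from a point `p ∈ ℝ²` to the diagonal segment from `(0,0)` to `(n,n)`. -/
noncomputable def segDist (p : ℝ × ℝ) (n : ℝ) : ℝ :=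
  sInf {d | ∃ t ∈ Set.Icc (0 : ℝ) n, d = Real.sqrt ((p.1 - t) ^ 2 + (p.2 - t) ^ 2)}

lemma aux_sqrt (s e n : ℝ) (hn : 0 < n) (hs : 0 ≤ s) (hsn : s ≤ n) (he : 0 ≤ e)
    (hes : e ≤ s ^ 2) : Real.sqrt (s ^ 2 - e) ≤ s - e / (2 * n) := by
  set r := Real.sqrt (s ^ 2 - e) with hr
  have hr0 : 0 ≤ r := Real.sqrt_nonneg _
  have hr2 : r ^ 2 = s ^ 2 - e := Real.sq_sqrt (by linarith)
  have hrs : r ≤ s := by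
    rw [hr]
    calc Real.sqrt (s ^ 2 - e) ≤ Real.sqrt (s ^ 2) := Real.sqrt_le_sqrt (by linarith)
    _ = s := by rw [Real.sqrt_sq hs]
  have key : e ≤ 2 * n * (s - r) := by nlinarith
  have h2 : e / (2 * n) ≤ s - r := (div_le_iff₀ (by positivity)).mpr (by linarith)
  linarith

/-- For `z = (n,n)` on the diagonal and `z' ≤ z` at distance at least `|z|^{3/4+ε}` from the
segment `[0,z]`, the defect `Δ(z,z') = 2(√(z₁z₂) − √(z₁'z₂') − √((z₁−z₁')(z₂−z₂')))` is at
least `c |z|^{1/2+2ε}` for large `|z|`, with `c = c(ε) > 0`. -/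
theorem stmt_16 (ε : ℝ) (hε : ε ∈ Ioo 0 (1 / 4 : ℝ)) :
    ∃ c > (0 : ℝ), ∃ N : ℕ, ∀ n : ℕ, N ≤ n → ∀ z1' z2' : ℕ, z1' ≤ n → z2' ≤ n →
      ((2 * n : ℕ) : ℝ) ^ ((3 : ℝ) / 4 + ε) ≤ segDist ((z1' : ℝ), (z2' : ℝ)) n →
      c * ((2 * n : ℕ) : ℝ) ^ ((1 : ℝ) / 2 + 2 * ε) ≤
        2 * (Real.sqrt ((n : ℝ) * n) - Real.sqrt ((z1' : ℝ) * z2') -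
          Real.sqrt (((n : ℝ) - z1') * ((n : ℝ) - z2'))) := by
  refine ⟨1, one_pos, 1, ?_⟩
  intro n hn z1' z2' h1 h2 hseg
  have hn0 : (0 : ℝ) < n := by exact_mod_cast hn
  set a : ℝ := (z1' : ℝ) with ha
  set b : ℝ := (z2' : ℝ) with hb
  have ha0 : 0 ≤ a := Nat.cast_nonneg _
  have hb0 : 0 ≤ b := Nat.cast_nonneg _
  have han : a ≤ (n : ℝ) := by rw [ha]; exact_mod_cast h1
  have hbn : b ≤ (n : ℝ) := by rw [hb]; exact_mod_cast h2
  set X : ℝ := ((2 * n : ℕ) : ℝ) with hX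
  have hX2 : X = 2 * (n : ℝ) := by push_cast [hX]; ring
  have hXpos : 0 < X := by rw [hX2]; linarith
  set D : ℝ := X ^ ((3 : ℝ) / 4 + ε) with hD
  have hDpos : 0 < D := Real.rpow_pos_of_pos hXpos _
  -- upper bound on segDist
  have hub : segDist (a, b) n ≤ Real.sqrt (((a - b) / 2) ^ 2 + ((b - a) / 2) ^ 2) := by
    apply csInf_le
    · exact ⟨0, fun x ⟨t, _, hx⟩ => hx ▸ Real.sqrt_nonneg _⟩
    · refine ⟨(a + b) / 2, ⟨by positivity, by linarith⟩, ?_⟩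
      congr 1
      ring
  set e : ℝ := ((a - b) / 2) ^ 2 with hee
  have he0 : 0 ≤ e := sq_nonneg _
  have hD2e : D ^ 2 ≤ 2 * e := by
    have h1 : D ≤ Real.sqrt (2 * e) := by
      refine le_trans (le_trans hseg hub) ?_
      apply Real.sqrt_le_sqrt
      rw [hee]; ring_nf; rfl
    have h2 : D ^ 2 ≤ Real.sqrt (2 * e) ^ 2 := by
      apply pow_le_pow_left₀ hDpos.le h1
    rwa [Real.sq_sqrt (by positivity)] at h2
  -- sqrt bounds
  have hab : a * b = ((a + b) / 2) ^ 2 - e := by rw [hee]; ring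
  have hcd : ((n : ℝ) - a) * ((n : ℝ) - b) = ((n : ℝ) - (a + b) / 2) ^ 2 - e := by
    rw [hee]; ring
  have hb1 : Real.sqrt (a * b) ≤ (a + b) / 2 - e / (2 * n) := by
    rw [hab]
    exact aux_sqrt _ _ _ hn0 (by linarith) (by linarith) he0 (by nlinarith)
  have hb2 : Real.sqrt (((n : ℝ) - a) * ((n : ℝ) - b)) ≤
      ((n : ℝ) - (a + b) / 2) - e / (2 * n) := by
    rw [hcd]
    exact aux_sqrt _ _ _ hn0 (by linarith) (by linarith) he0 (by nlinarith)
  have hnn : Real.sqrt ((n : ℝ) * n) = n := by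
    rw [Real.sqrt_mul_self hn0.le]
  -- rpow arithmetic : D^2 = X^(1/2+2ε) * X
  set Y : ℝ := X ^ ((1 : ℝ) / 2 + 2 * ε) with hY
  have hYpos : 0 < Y := Real.rpow_pos_of_pos hXpos _
  have hDY : D ^ 2 = Y * X := by
    rw [hD, hY, ← Real.rpow_natCast (X ^ ((3 : ℝ) / 4 + ε)) 2, ← Real.rpow_mul hXpos.le,
      show ((3 : ℝ) / 4 + ε) * ((2 : ℕ) : ℝ) = (1 / 2 + 2 * ε) + 1 by push_cast; ring,
      Real.rpow_add hXpos, Real.rpow_one]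
  -- conclude
  have hE : Y * n ≤ e := by
    have h3 : Y * X ≤ 2 * e := hDY ▸ hD2e
    rw [hX2] at h3
    have h4 : Y * (2 * (n : ℝ)) = 2 * (Y * n) := by ring
    linarith
  have hfrac : Y / 2 ≤ e / (2 * n) := by
    rw [div_le_div_iff₀ (by norm_num) (by positivity)]
    have h5 : Y * (2 * (n : ℝ)) = 2 * (Y * n) := by ring
    linarith
  rw [hnn, one_mul]
  linarith
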